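/- arXiv:1708.02461 — 2 statements merged into one kernel-verified Lean document; each statement's English description precedes it below -/
import Mathlib

section
/- For any real symmetric positive semidefinite 3×3 matrix Θ with trace equal to 3T_tr (T_tr ≥ 0), any ν with −1/2 < ν < 1, any θ with 0 ≤ θ ≤ 1, and any T_δ ≥ T_tr·3/(3+δ) for δ > 0, the matrix 𝒯 = θ·T_δ·Id + (1−θ)·((1−ν)·T_tr·Id + ν·Θ) satisfies kᵀ𝒯k ≥ θ·T_δ·|k|² for all k ∈ ℝ³. -/
/-!
Write `𝒯 = θ T_δ Id + (1 - θ) M` with `M = (1 - ν) T_tr Id + ν Θ`; it suffices that `M` is positive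
semidefinite. For `ν ≥ 0` this is clear. For `ν < 0` use `kᵀ Θ k ≤ tr Θ · |k|²` (write `Θ = Bᵀ B`
and apply Cauchy–Schwarz to each row of `B`), which gives `kᵀ M k ≥ (1 + 2ν) T_tr |k|² ≥ 0`.
-/

open Matrix

namespace Matrix

variable {n : Type*} [Fintype n]

theorem PosSemidef.dotProduct_mulVec_le_trace_mul {A : Matrix n n ℝ} (hA : A.PosSemidef)
    (k : n → ℝ) : k ⬝ᵥ A *ᵥ k ≤ A.trace * ∑ j, k j ^ 2 := by
  classical
  open scoped MatrixOrder in
  obtain ⟨B, rfl⟩ := CStarAlgebra.nonneg_iff_eq_star_mul_self.mp hA.nonneg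
  have hquad : k ⬝ᵥ (star B * B) *ᵥ k = ∑ i, (∑ j, B i j * k j) ^ 2 := by
    rw [← mulVec_mulVec, dotProduct_mulVec, star_eq_conjTranspose,
      conjTranspose_eq_transpose_of_trivial, vecMul_transpose]
    simp only [dotProduct, mulVec, sq]
  have htrace : (star B * B).trace = ∑ i, ∑ j, B i j ^ 2 := by
    rw [trace_mul_comm]
    simp only [trace, diag, mul_apply, star_apply, star_trivial, sq]
  rw [hquad, htrace, Finset.sum_mul]
  exact Finset.sum_le_sum fun i _ => Finset.sum_mul_sq_le_sq_mul_sq _ _ _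

lemma dotProduct_self_eq_sum_sq (k : n → ℝ) : k ⬝ᵥ k = ∑ j, k j ^ 2 := by
  simp only [dotProduct, sq]

theorem PosSemidef.posSemidef_smul_one_add_smul_of_trace_eq [DecidableEq n]
    {Θ : Matrix n n ℝ} (hΘ : Θ.PosSemidef) {t ν : ℝ} (ht : 0 ≤ t) (htrace : Θ.trace = 3 * t)
    (hν₁ : -(1 / 2) ≤ ν) (hν₂ : ν ≤ 1) :
    ((1 - ν) • t • (1 : Matrix n n ℝ) + ν • Θ).PosSemidef := by
  refine .of_dotProduct_mulVec_nonneg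
    (((isHermitian_one.smul (.all t)).smul (.all _)).add (hΘ.isHermitian.smul (.all ν))) fun k => ?_
  have hS : 0 ≤ ∑ j, k j ^ 2 := by positivity
  have hq₀ : 0 ≤ k ⬝ᵥ Θ *ᵥ k := by simpa using hΘ.dotProduct_mulVec_nonneg k
  have hq₁ : k ⬝ᵥ Θ *ᵥ k ≤ 3 * t * ∑ j, k j ^ 2 := htrace ▸ hΘ.dotProduct_mulVec_le_trace_mul k
  simp only [star_trivial, add_mulVec, smul_mulVec, one_mulVec, dotProduct_add,
    dotProduct_smul, smul_eq_mul, dotProduct_self_eq_sum_sq]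
  have htS : 0 ≤ t * ∑ j, k j ^ 2 := mul_nonneg ht hS
  rcases le_total 0 ν with hν | hν
  · linarith [mul_nonneg hν hq₀, mul_nonneg (sub_nonneg.mpr hν₂) htS]
  · have h2ν : 0 ≤ 1 + 2 * ν := by linarith
    linarith [mul_le_mul_of_nonpos_left hq₁ hν, mul_nonneg h2ν htS]

end Matrix

theorem stmt_2_general (Θ : Matrix (Fin 3) (Fin 3) ℝ) (hpsd : Θ.PosSemidef)
    (Ttr Tδ ν θ : ℝ) (hTtr : 0 ≤ Ttr) (htrace : Θ.trace = 3 * Ttr)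
    (hν1 : -(1/2) < ν) (hν2 : ν < 1) (hθ1 : θ ≤ 1)
    (𝒯 : Matrix (Fin 3) (Fin 3) ℝ)
    (h𝒯 : 𝒯 = θ • Tδ • (1 : Matrix (Fin 3) (Fin 3) ℝ)
        + (1 - θ) • ((1 - ν) • Ttr • (1 : Matrix (Fin 3) (Fin 3) ℝ) + ν • Θ)) :
    ∀ k : Fin 3 → ℝ, θ * Tδ * (∑ i, (k i)^2) ≤ k ⬝ᵥ 𝒯.mulVec k := by
  intro k
  have hrelaxed := (hpsd.posSemidef_smul_one_add_smul_of_trace_eq hTtr htrace hν1.le hν2.le).smul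
    (sub_nonneg.mpr hθ1)
  have := hrelaxed.dotProduct_mulVec_nonneg k
  subst h𝒯
  simp only [star_trivial, add_mulVec, smul_mulVec, one_mulVec, dotProduct_add,
    dotProduct_smul, smul_eq_mul, dotProduct_self_eq_sum_sq] at this ⊢
  linarith

theorem stmt_2 (Θ : Matrix (Fin 3) (Fin 3) ℝ) (hsymm : Θ.IsSymm) (hpsd : Θ.PosSemidef)
    (Ttr Tδ ν θ δ : ℝ) (hTtr : 0 ≤ Ttr) (htrace : Θ.trace = 3 * Ttr)
    (hν1 : -(1/2) < ν) (hν2 : ν < 1) (hθ0 : 0 ≤ θ) (hθ1 : θ ≤ 1)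
    (hδ : 0 < δ) (hTδ : Ttr * 3 / (3 + δ) ≤ Tδ)
    (𝒯 : Matrix (Fin 3) (Fin 3) ℝ)
    (h𝒯 : 𝒯 = θ • Tδ • (1 : Matrix (Fin 3) (Fin 3) ℝ)
        + (1 - θ) • ((1 - ν) • Ttr • (1 : Matrix (Fin 3) (Fin 3) ℝ) + ν • Θ)) :
    ∀ k : Fin 3 → ℝ, θ * Tδ * (∑ i, (k i)^2) ≤ k ⬝ᵥ 𝒯.mulVec k :=
  stmt_2_general Θ hpsd Ttr Tδ ν θ hTtr htrace hν1 hν2 hθ1 𝒯 h𝒯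
end

section
/- Under the hypotheses of the previous statement together with T_tr ≤ ((3+δ)/3)·T_δ for some δ > 0, one has kᵀ𝒯k ≤ (1/3)·max{1−ν,1+2ν}·(3 + δ(1−θ))·T_δ·|k|² for all k ∈ ℝ³. -/
/-!
Expanding the definition, `kᵀ𝒯k = θ T_δ |k|² + (1 - θ) ((1 - ν) T_tr |k|² + ν kᵀΘk)`.
For positive semidefinite `Θ` the quadratic form satisfies `0 ≤ kᵀΘk ≤ tr Θ · |k|² = 3 T_tr |k|²`
(write `Θ = BᵀB` and apply Cauchy–Schwarz to each row of `B`), so the bracket is at most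
`max (1 - ν) (1 + 2ν) · T_tr |k|²`, whichever sign `ν` has. Since this maximum is at least `1`,
the bound `T_tr ≤ (3 + δ)/3 · T_δ` finishes the estimate.
-/

open Matrix

open MatrixOrder in
theorem Matrix.PosSemidef.dotProduct_mulVec_le_trace_mul_s4 {n : Type*} [Fintype n]
    {A : Matrix n n ℝ} (hA : A.PosSemidef) (x : n → ℝ) :
    x ⬝ᵥ A *ᵥ x ≤ A.trace * (x ⬝ᵥ x) := by
  classical
  obtain ⟨B, rfl⟩ := CStarAlgebra.nonneg_iff_eq_star_mul_self.mp hA.nonneg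
  have hquad : x ⬝ᵥ (star B * B) *ᵥ x = ∑ i, (∑ j, B i j * x j) ^ 2 := by
    rw [← mulVec_mulVec, dotProduct_mulVec, star_eq_conjTranspose, vecMul_conjTranspose]
    simp [dotProduct, mulVec, sq]
  have htrace : (star B * B).trace = ∑ i, ∑ j, B i j ^ 2 := by
    rw [Finset.sum_comm]
    simp [trace, mul_apply, sq]
  rw [hquad, htrace, Finset.sum_mul]
  gcongr with i
  simpa [dotProduct, sq] using Finset.sum_mul_sq_le_sq_mul_sq Finset.univ (B i) x

theorem one_le_max_one_sub_one_add_two_mul (ν : ℝ) : 1 ≤ max (1 - ν) (1 + 2 * ν) := by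
  rcases le_total ν 0 with h | h
  · exact le_max_of_le_left (by linarith)
  · exact le_max_of_le_right (by linarith)

theorem one_sub_mul_add_mul_le_max {ν t q S : ℝ} (ht : 0 ≤ t) (hS : 0 ≤ S)
    (hq₀ : 0 ≤ q) (hq : q ≤ 3 * t * S) :
    (1 - ν) * t * S + ν * q ≤ max (1 - ν) (1 + 2 * ν) * t * S := by
  have htS : 0 ≤ t * S := mul_nonneg ht hS
  rcases le_total 0 ν with hν | hν
  · nlinarith [mul_le_mul_of_nonneg_left hq hν, le_max_right (1 - ν) (1 + 2 * ν)]
  · nlinarith [mul_nonpos_of_nonpos_of_nonneg hν hq₀, le_max_left (1 - ν) (1 + 2 * ν)]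

theorem stmt_4_general (Θ : Matrix (Fin 3) (Fin 3) ℝ) (hpsd : Θ.PosSemidef)
    (Ttr Tδ ν θ δ : ℝ) (hTtr : 0 ≤ Ttr) (hTδ : 0 ≤ Tδ) (htrace : Θ.trace = 3 * Ttr)
    (hθ0 : 0 ≤ θ) (hθ1 : θ ≤ 1)
    (hle : Ttr ≤ ((3 + δ) / 3) * Tδ)
    (𝒯 : Matrix (Fin 3) (Fin 3) ℝ)
    (h𝒯 : 𝒯 = θ • Tδ • (1 : Matrix (Fin 3) (Fin 3) ℝ)
        + (1 - θ) • ((1 - ν) • Ttr • (1 : Matrix (Fin 3) (Fin 3) ℝ) + ν • Θ)) :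
    ∀ k : Fin 3 → ℝ,
      k ⬝ᵥ 𝒯.mulVec k ≤ (1/3) * max (1 - ν) (1 + 2 * ν) * (3 + δ * (1 - θ)) * Tδ * (∑ i, (k i)^2) := by
  intro k
  set S := k ⬝ᵥ k
  set M := max (1 - ν) (1 + 2 * ν)
  have hS : ∑ i, k i ^ 2 = S := by simp [S, dotProduct, sq]
  have hform : k ⬝ᵥ 𝒯 *ᵥ k = θ * (Tδ * S) + (1 - θ) * ((1 - ν) * Ttr * S + ν * (k ⬝ᵥ Θ *ᵥ k)) := by
    simp only [h𝒯, add_mulVec, smul_mulVec, one_mulVec, dotProduct_add, dotProduct_smul,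
      smul_eq_mul, S]
    ring
  have hq₀ : 0 ≤ k ⬝ᵥ Θ *ᵥ k := by simpa using hpsd.dotProduct_mulVec_nonneg k
  have hq : k ⬝ᵥ Θ *ᵥ k ≤ 3 * Ttr * S := htrace ▸ hpsd.dotProduct_mulVec_le_trace_mul_s4 k
  have hS₀ : 0 ≤ S := dotProduct_self_star_nonneg k
  have hM : 1 ≤ M := one_le_max_one_sub_one_add_two_mul ν
  have h1θ : 0 ≤ 1 - θ := sub_nonneg.mpr hθ1
  rw [hform, hS]
  calc θ * (Tδ * S) + (1 - θ) * ((1 - ν) * Ttr * S + ν * (k ⬝ᵥ Θ *ᵥ k))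
      ≤ θ * (M * Tδ * S) + (1 - θ) * (M * Ttr * S) := by
        gcongr θ * ?_ + _ * ?_
        · rw [mul_assoc]
          exact le_mul_of_one_le_left (by positivity) hM
        · exact one_sub_mul_add_mul_le_max hTtr hS₀ hq₀ hq
    _ ≤ θ * (M * Tδ * S) + (1 - θ) * (M * (((3 + δ) / 3) * Tδ) * S) := by
        gcongr
    _ = 1 / 3 * M * (3 + δ * (1 - θ)) * Tδ * S := by ring

theorem stmt_4 (Θ : Matrix (Fin 3) (Fin 3) ℝ) (hsymm : Θ.IsSymm) (hpsd : Θ.PosSemidef)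
    (Ttr Tδ ν θ δ : ℝ) (hTtr : 0 ≤ Ttr) (hTδ : 0 ≤ Tδ) (htrace : Θ.trace = 3 * Ttr)
    (hν1 : -(1/2) < ν) (hν2 : ν < 1) (hθ0 : 0 ≤ θ) (hθ1 : θ ≤ 1)
    (hδ : 0 < δ) (hle : Ttr ≤ ((3 + δ) / 3) * Tδ)
    (𝒯 : Matrix (Fin 3) (Fin 3) ℝ)
    (h𝒯 : 𝒯 = θ • Tδ • (1 : Matrix (Fin 3) (Fin 3) ℝ)
        + (1 - θ) • ((1 - ν) • Ttr • (1 : Matrix (Fin 3) (Fin 3) ℝ) + ν • Θ)) :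
    ∀ k : Fin 3 → ℝ,
      k ⬝ᵥ 𝒯.mulVec k ≤ (1/3) * max (1 - ν) (1 + 2 * ν) * (3 + δ * (1 - θ)) * Tδ * (∑ i, (k i)^2) :=
  stmt_4_general Θ hpsd Ttr Tδ ν θ δ hTtr hTδ htrace hθ0 hθ1 hle 𝒯 h𝒯
end
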